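/- arXiv:1910.01326 — 2 statements merged into one kernel-verified Lean document; each statement's English description precedes it below -/
import Mathlib

section
/- For trigonometric polynomials on the circle, the classical Bernstein inequality holds: if P(x) = ∑_{k=-N}^{N} α_k e^{ikx} with complex coefficients, then the supremum norm of P' is at most N times the supremum norm of P. -/
/-! M. Riesz's interpolation formula: for a trigonometric polynomial `P` of degree at most `N`,
`P' x = ∑_{j < 2N} c_j P (x + θ_j)` with `θ_j = (2j+1)π/(2N)` and
`c_j = (-1)^j / (4N sin²(θ_j/2))`. As `∑ |c_j| = N`, the inequality is immediate.

It suffices to check the formula on `e^{ikx}`, `|k| ≤ N`, and both this and the value of `∑ |c_j|`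
reduce to the sums `F m = ∑_j e^{imθ_j} / sin²(θ_j/2)`. Since `e^{iθ} + e^{-iθ} - 2 = -4 sin²(θ/2)`,
the second difference of `F` is `-4 ∑_j e^{imθ_j}`, which vanishes for `0 < m < 2N`; so `F` is affine
on `[0, 2N]`, and the symmetries `F (-m) = F m`, `F (m + 2N) = -F m` force `F m = 4N(N - m)`. -/

open Complex Finset
open scoped Real

lemma geom_sum_eq_zero_of_pow_eq_one {R : Type*} [CommRing R] [IsDomain R] {x : R} {n : ℕ}
    (hx : x ≠ 1) (hn : x ^ n = 1) : ∑ i ∈ range n, x ^ i = 0 :=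
  eq_zero_of_ne_zero_of_mul_left_eq_zero (sub_ne_zero_of_ne hx.symm)
    (by rw [mul_neg_geom_sum, hn, sub_self])

namespace RieszInterpolation

/-- The `2N` zeros of `cos (N x)` in `(0, 2π)`. -/
noncomputable def node (N j : ℕ) : ℝ := (2 * j + 1) * π / (2 * N)

section Nodes

variable {N j : ℕ}

lemma sin_half_node_pos (hj : j < 2 * N) : 0 < Real.sin (node N j / 2) := by
  have hN : (0 : ℝ) < N := by exact_mod_cast (show 0 < N by omega)
  have hj' : (j : ℝ) + 1 ≤ 2 * N := by exact_mod_cast hj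
  apply Real.sin_pos_of_pos_of_lt_pi
  · unfold node; positivity
  · rw [node, div_div, div_lt_iff₀ (by positivity)]
    nlinarith [Real.pi_pos]

lemma node_reflect (hj : j < 2 * N) : node N (2 * N - 1 - j) = 2 * π - node N j := by
  have hN : (N : ℝ) ≠ 0 := by exact_mod_cast (show N ≠ 0 by omega)
  rw [node, node, Nat.cast_sub (by omega), Nat.cast_sub (by omega)]
  field_simp
  push_cast
  ring

lemma exp_I_mul_N_mul_node (hN : N ≠ 0) :
    Complex.exp (I * N * node N j) = I * (-1) ^ j := by
  have harg : I * N * (node N j : ℂ) = (2 * j + 1 : ℕ) * (π / 2 * I) := by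
    rw [node]
    push_cast
    field_simp
  rw [harg, exp_nat_mul, exp_pi_div_two_mul_I, pow_succ, pow_mul, I_sq, mul_comm]

lemma exp_I_mul_add_two_mul_node (m : ℂ) (hN : N ≠ 0) :
    Complex.exp (I * (m + 2 * N) * node N j) = -Complex.exp (I * m * node N j) := by
  have h : Complex.exp (I * (2 * N) * node N j) = -1 := by
    rw [show I * (2 * N) * (node N j : ℂ) = (2 : ℕ) * (I * N * node N j) by push_cast; ring,
      exp_nat_mul, exp_I_mul_N_mul_node hN, mul_pow, I_sq, ← pow_mul, Even.neg_one_pow ⟨j, by ring⟩,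
      neg_one_mul]
  rw [mul_add, add_mul, Complex.exp_add, h, mul_neg_one]

end Nodes

noncomputable def expSum (N : ℕ) (m : ℤ) : ℂ :=
  ∑ j ∈ range (2 * N), Complex.exp (I * m * node N j)

lemma expSum_zero (N : ℕ) : expSum N 0 = 2 * N := by
  simp [expSum]

lemma expSum_eq_zero {N m : ℕ} (hm₀ : 0 < m) (hm : m < 2 * N) : expSum N m = 0 := by
  have hN : 2 * N ≠ 0 := by omega
  set ζ := Complex.exp (2 * π * I / (2 * N : ℕ))
  have hζ : IsPrimitiveRoot ζ (2 * N) := Complex.isPrimitiveRoot_exp _ hN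
  have hterm (j : ℕ) : Complex.exp (I * (m : ℤ) * node N j) =
      Complex.exp (I * m * π / (2 * N)) * (ζ ^ m) ^ j := by
    rw [← pow_mul, ← exp_nat_mul, ← Complex.exp_add, node]
    congr 1
    push_cast
    field_simp
    ring
  have hζm : ζ ^ m ≠ 1 := fun h =>
    (Nat.le_of_dvd hm₀ ((hζ.pow_eq_one_iff_dvd m).mp h)).not_gt hm
  have hζm' : (ζ ^ m) ^ (2 * N) = 1 := by
    rw [← pow_mul, mul_comm, pow_mul, hζ.pow_eq_one, one_pow]
  simp only [expSum, hterm, ← mul_sum, geom_sum_eq_zero_of_pow_eq_one hζm hζm', mul_zero]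

lemma exp_add_exp_sub_two_mul_exp (a θ : ℂ) :
    Complex.exp (I * (a + 1) * θ) + Complex.exp (I * (a - 1) * θ) - 2 * Complex.exp (I * a * θ) =
      -4 * Complex.sin (θ / 2) ^ 2 * Complex.exp (I * a * θ) := by
  have hcos : Complex.cos θ = 1 - 2 * Complex.sin (θ / 2) ^ 2 := by
    rw [← cos_two_mul_eq_one_sub, mul_div_cancel₀ _ two_ne_zero]
  rw [show I * (a + 1) * θ = I * a * θ + θ * I by ring,
    show I * (a - 1) * θ = I * a * θ + -θ * I by ring, Complex.exp_add, Complex.exp_add,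
    ← sub_eq_zero]
  rw [Complex.cos] at hcos
  linear_combination (2 * Complex.exp (I * a * θ)) * hcos

noncomputable def cscSqExpSum (N : ℕ) (m : ℤ) : ℂ :=
  ∑ j ∈ range (2 * N), Complex.exp (I * m * node N j) / (Real.sin (node N j / 2) : ℂ) ^ 2

lemma cscSqExpSum_neg (N : ℕ) (m : ℤ) : cscSqExpSum N (-m) = cscSqExpSum N m := by
  rw [cscSqExpSum, ← sum_range_reflect]
  refine sum_congr rfl fun j hj => ?_
  rw [node_reflect (mem_range.mp hj), show (2 * π - node N j) / 2 = π - node N j / 2 by ring,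
    Real.sin_pi_sub, show I * ((-m : ℤ) : ℂ) * ((2 * π - node N j : ℝ) : ℂ) =
      I * m * node N j + (-m : ℤ) * (2 * π * I) by push_cast; ring,
    Complex.exp_add, exp_int_mul_two_pi_mul_I, mul_one]

lemma cscSqExpSum_add_two_mul (N : ℕ) (m : ℤ) :
    cscSqExpSum N (m + 2 * N) = -cscSqExpSum N m := by
  rw [cscSqExpSum, cscSqExpSum, ← sum_neg_distrib]
  refine sum_congr rfl fun j hj => ?_
  have hN : N ≠ 0 := by have := mem_range.mp hj; omega
  push_cast
  rw [exp_I_mul_add_two_mul_node _ hN, neg_div]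

lemma cscSqExpSum_second_diff (N : ℕ) (m : ℤ) :
    cscSqExpSum N (m + 1) + cscSqExpSum N (m - 1) - 2 * cscSqExpSum N m = -4 * expSum N m := by
  simp only [cscSqExpSum, expSum, mul_sum, ← sum_add_distrib, ← sum_sub_distrib]
  refine sum_congr rfl fun j hj => ?_
  have hsin : (Real.sin (node N j / 2) : ℂ) ≠ 0 :=
    ofReal_ne_zero.mpr (sin_half_node_pos (mem_range.mp hj)).ne'
  have h := exp_add_exp_sub_two_mul_exp m (node N j)
  push_cast at hsin ⊢
  rw [← add_div, mul_div_assoc', div_sub_div_same, h, div_eq_iff (pow_ne_zero 2 hsin)]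
  ring

lemma cscSqExpSum_self (N : ℕ) : cscSqExpSum N N = 0 := by
  have h := cscSqExpSum_add_two_mul N (-N)
  rw [show -(N : ℤ) + 2 * N = N by ring, cscSqExpSum_neg] at h
  linear_combination h / 2

lemma cscSqExpSum_succ_sub {N m : ℕ} (hm : m < 2 * N) :
    cscSqExpSum N (m + 1) - cscSqExpSum N m = -4 * N := by
  induction m with
  | zero =>
    have h := cscSqExpSum_second_diff N 0
    rw [zero_add, zero_sub, cscSqExpSum_neg, expSum_zero] at h
    push_cast
    linear_combination h / 2
  | succ m ih =>
    have h := cscSqExpSum_second_diff N (m + 1)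
    rw [add_sub_cancel_right, ← Nat.cast_succ, expSum_eq_zero m.succ_pos hm] at h
    push_cast at h ⊢
    linear_combination h + ih (by omega)

lemma cscSqExpSum_natCast_sub_zero {N m : ℕ} (hm : m ≤ 2 * N) :
    cscSqExpSum N m - cscSqExpSum N 0 = -4 * N * m := by
  have h := sum_range_sub (fun i : ℕ => cscSqExpSum N i) m
  push_cast at h
  rw [← h, sum_congr rfl fun i hi => cscSqExpSum_succ_sub (by have := mem_range.mp hi; omega)]
  simp [mul_comm]

lemma cscSqExpSum_zero (N : ℕ) : cscSqExpSum N 0 = 4 * N ^ 2 := by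
  have h := cscSqExpSum_natCast_sub_zero (N := N) (m := N) (by omega)
  rw [cscSqExpSum_self] at h
  linear_combination -h

lemma cscSqExpSum_eq {N : ℕ} {m : ℤ} (hm₀ : 0 ≤ m) (hm : m ≤ 2 * N) :
    cscSqExpSum N m = 4 * N * (N - m) := by
  lift m to ℕ using hm₀
  have h := cscSqExpSum_natCast_sub_zero (N := N) (m := m) (by exact_mod_cast hm)
  rw [cscSqExpSum_zero] at h
  push_cast
  linear_combination h

noncomputable def weight (N j : ℕ) : ℝ := (-1) ^ j / (4 * N * Real.sin (node N j / 2) ^ 2)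

lemma weight_mul_exp {N : ℕ} (hN : N ≠ 0) (j : ℕ) (k : ℤ) :
    (weight N j : ℂ) * Complex.exp (I * k * node N j) =
      -I / (4 * N) *
        (Complex.exp (I * (N + k : ℤ) * node N j) / (Real.sin (node N j / 2) : ℂ) ^ 2) := by
  rw [Int.cast_add, Int.cast_natCast, mul_add, add_mul, Complex.exp_add, exp_I_mul_N_mul_node hN,
    weight]
  push_cast
  field_simp
  rw [I_sq]
  ring

lemma sum_weight_mul_exp {N : ℕ} {k : ℤ} (hk : |k| ≤ N) :
    ∑ j ∈ range (2 * N), (weight N j : ℂ) * Complex.exp (I * k * node N j) = I * k := by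
  rcases eq_or_ne N 0 with rfl | hN
  · simp [abs_nonpos_iff.mp (by exact_mod_cast hk)]
  rw [sum_congr rfl fun j _ => weight_mul_exp hN j k, ← mul_sum]
  change -I / (4 * N) * cscSqExpSum N (N + k) = _
  rw [abs_le] at hk
  rw [cscSqExpSum_eq (by omega) (by omega)]
  push_cast
  field_simp
  ring

lemma abs_weight (N j : ℕ) : |weight N j| = (4 * N : ℝ)⁻¹ * (Real.sin (node N j / 2) ^ 2)⁻¹ := by
  rw [weight, abs_div, abs_pow, abs_neg, abs_one, one_pow, abs_of_nonneg (by positivity), one_div,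
    mul_inv]

lemma sum_inv_sin_sq_half_node (N : ℕ) :
    ∑ j ∈ range (2 * N), (Real.sin (node N j / 2) ^ 2)⁻¹ = 4 * N ^ 2 := by
  have h := cscSqExpSum_zero N
  simp only [cscSqExpSum, Int.cast_zero, mul_zero, zero_mul, Complex.exp_zero, one_div] at h
  exact_mod_cast h

lemma sum_abs_weight (N : ℕ) : ∑ j ∈ range (2 * N), |weight N j| = N := by
  rcases eq_or_ne N 0 with rfl | hN
  · simp
  rw [sum_congr rfl fun j _ => abs_weight N j, ← mul_sum, sum_inv_sin_sq_half_node]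
  field_simp

end RieszInterpolation

open RieszInterpolation

noncomputable def trigPoly (N : ℕ) (α : ℤ → ℂ) (x : ℝ) : ℂ :=
  ∑ k ∈ Icc (-(N : ℤ)) N, α k * Complex.exp (I * k * x)

lemma hasDerivAt_trigPoly (N : ℕ) (α : ℤ → ℂ) (x : ℝ) :
    HasDerivAt (trigPoly N α)
      (∑ k ∈ Icc (-(N : ℤ)) N, α k * (I * k) * Complex.exp (I * k * x)) x := by
  unfold trigPoly
  refine HasDerivAt.fun_sum fun k _ => ?_
  have h := (((hasDerivAt_id x).ofReal_comp.const_mul (I * k)).cexp).const_mul (α k)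
  simpa [mul_comm, mul_left_comm, mul_assoc] using h

lemma norm_trigPoly_le (N : ℕ) (α : ℤ → ℂ) (x : ℝ) :
    ‖trigPoly N α x‖ ≤ ∑ k ∈ Icc (-(N : ℤ)) N, ‖α k‖ := by
  refine (norm_sum_le _ _).trans (sum_le_sum fun k _ => ?_)
  rw [norm_mul, show I * k * x = ((k * x : ℝ) : ℂ) * I by push_cast; ring, norm_exp_ofReal_mul_I,
    mul_one]

lemma deriv_trigPoly_eq_sum_weight_mul (N : ℕ) (α : ℤ → ℂ) (x : ℝ) :
    deriv (trigPoly N α) x =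
      ∑ j ∈ range (2 * N), (weight N j : ℂ) * trigPoly N α (x + node N j) := by
  simp only [(hasDerivAt_trigPoly N α x).deriv, trigPoly, mul_sum]
  rw [sum_comm]
  refine sum_congr rfl fun k hk => ?_
  calc α k * (I * k) * Complex.exp (I * k * x)
      = α k * Complex.exp (I * k * x) *
          ∑ j ∈ range (2 * N), (weight N j : ℂ) * Complex.exp (I * k * node N j) := by
        rw [sum_weight_mul_exp (abs_le.mpr (mem_Icc.mp hk))]
        ring
    _ = _ := by
        rw [mul_sum]
        refine sum_congr rfl fun j _ => ?_
        rw [ofReal_add, mul_add, Complex.exp_add]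
        ring

/-- Classical Bernstein inequality for trigonometric polynomials:
if `P x = ∑_{k=-N}^N α k * e^{ikx}` then `‖P'‖_∞ ≤ N ‖P‖_∞`. -/
theorem bernstein_trig_poly (N : ℕ) (α : ℤ → ℂ) (P : ℝ → ℂ)
    (hP : ∀ x : ℝ, P x = ∑ k ∈ Finset.Icc (-(N : ℤ)) (N : ℤ),
      α k * Complex.exp (Complex.I * (k : ℂ) * (x : ℂ))) :
    (⨆ x : ℝ, ‖deriv P x‖) ≤ (N : ℝ) * ⨆ x : ℝ, ‖P x‖ := by
  obtain rfl : P = trigPoly N α := funext hP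
  have hbdd : BddAbove (Set.range fun y => ‖trigPoly N α y‖) :=
    ⟨_, Set.forall_mem_range.mpr (norm_trigPoly_le N α)⟩
  refine ciSup_le fun x => ?_
  calc ‖deriv (trigPoly N α) x‖
      = ‖∑ j ∈ range (2 * N), (weight N j : ℂ) * trigPoly N α (x + node N j)‖ := by
        rw [deriv_trigPoly_eq_sum_weight_mul]
    _ ≤ ∑ j ∈ range (2 * N), |weight N j| * ⨆ y, ‖trigPoly N α y‖ := by
        refine (norm_sum_le _ _).trans (sum_le_sum fun j _ => ?_)
        rw [norm_mul, norm_real, Real.norm_eq_abs]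
        exact mul_le_mul_of_nonneg_left (le_ciSup hbdd _) (abs_nonneg _)
    _ = N * ⨆ y, ‖trigPoly N α y‖ := by
        rw [← sum_mul, sum_abs_weight]
end

section
/- Converse derivation: under the same discrete-spectrum setting, if the discrete Bernstein inequality ‖Γ(∑_{k=0}^N α_k φ_k)‖_p ≤ C λ_N ‖∑_{k=0}^N α_k φ_k‖_p holds for all N ≥ 1, and if sup_{h>0} ‖ψ(hL)‖_{p→p} < ∞ for ψ ∈ C_c^∞ with ψ = 1 on [0,1] and supp ψ ⊆ [0,2], then ‖Γψ(hL) f‖_p ≤ C'/√h · ‖f‖_p for all h > 0 and f ∈ L^p ∩ L². -/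
open scoped BigOperators

/-- Discrete to semi-classical Bernstein inequality: if the discrete Bernstein
inequality holds and `ψ(hL)` (modelled by `T h`) is uniformly bounded and
spectrally localizes on `[0, 2/h]`, then `‖Γ ψ(hL) f‖ ≤ C'/√h ‖f‖`. -/
theorem discrete_to_semiclassical_bernstein {X Y : Type*}
    [NormedAddCommGroup X] [NormedSpace ℂ X] [NormedAddCommGroup Y]
    (Γ : X → Y) (φ : ℕ → X) (lam : ℕ → ℝ)
    (hlam0 : 0 ≤ lam 0) (hmono : Monotone lam)
    (T : ℝ → X →ₗ[ℂ] X) (C C₁ : ℝ) (hC : 0 < C) (hC₁ : 0 < C₁)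
    (hbern : ∀ N : ℕ, 1 ≤ N → ∀ α : ℕ → ℂ,
      ‖Γ (∑ k ∈ Finset.range (N + 1), α k • φ k)‖ ≤
        C * lam N * ‖∑ k ∈ Finset.range (N + 1), α k • φ k‖)
    (hmult : ∀ h : ℝ, 0 < h → ∀ f : X, ‖T h f‖ ≤ C₁ * ‖f‖)
    (hloc : ∀ h : ℝ, 0 < h → ∀ f : X, ∃ (N : ℕ) (α : ℕ → ℂ), 1 ≤ N ∧
      T h f = ∑ k ∈ Finset.range (N + 1), α k • φ k ∧ lam N ^ 2 ≤ 2 / h) :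
    ∃ C' : ℝ, 0 < C' ∧ ∀ h : ℝ, 0 < h → ∀ f : X,
      ‖Γ (T h f)‖ ≤ C' / Real.sqrt h * ‖f‖ := by
  refine ⟨C * Real.sqrt 2 * C₁, by positivity, fun h hh f => ?_⟩
  obtain ⟨N, α, hN1, hTf, hN2⟩ := hloc h hh f
  have hlamN : 0 ≤ lam N := le_trans hlam0 (hmono (Nat.zero_le N))
  have hlamle : lam N ≤ Real.sqrt 2 / Real.sqrt h := by
    calc lam N = Real.sqrt (lam N ^ 2) := (Real.sqrt_sq hlamN).symm
      _ ≤ Real.sqrt (2 / h) := Real.sqrt_le_sqrt hN2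
      _ = Real.sqrt 2 / Real.sqrt h := Real.sqrt_div (by norm_num) h
  calc ‖Γ (T h f)‖ = ‖Γ (∑ k ∈ Finset.range (N + 1), α k • φ k)‖ := by rw [hTf]
    _ ≤ C * lam N * ‖∑ k ∈ Finset.range (N + 1), α k • φ k‖ := hbern N hN1 α
    _ = C * lam N * ‖T h f‖ := by rw [hTf]
    _ ≤ C * (Real.sqrt 2 / Real.sqrt h) * (C₁ * ‖f‖) := by
        apply mul_le_mul
        · exact mul_le_mul_of_nonneg_left hlamle (le_of_lt hC)
        · exact hmult h hh f
        · exact norm_nonneg _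
        · positivity
    _ = C * Real.sqrt 2 * C₁ / Real.sqrt h * ‖f‖ := by ring
end
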